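/- Let K = K(N,D) be a fractal square with N ≥ 3 such that every connected component of K is either a singleton or a vertical line segment. Suppose there exists d = (j,k) ∈ D such that the column {j} × {0,1,…,N−1} is not contained in D. Then the point x₀ = (j/(N−1), k/(N−1)) (the unique fixed point of f_d(x) = (x+d)/N) lies in K and the connected component of x₀ in K is the singleton {x₀}. -/

import Mathlib

open Set Metric Topology Pointwise Filter

noncomputable section

abbrev Plane : Type := EuclideanSpace ℝ (Fin 2)

/-- The closed unit square `[0,1]²` in the plane. -/
def unitSq : Set Plane := {x | x 0 ∈ Icc (0:ℝ) 1 ∧ x 1 ∈ Icc (0:ℝ) 1}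

/-- The embedding of `ℤ²` into the plane. -/
def emb (d : ℤ × ℤ) : Plane := WithLp.toLp 2 ![(d.1 : ℝ), (d.2 : ℝ)]

/-- The `n`-th approximation `K⁽ⁿ⁾` of the fractal square:
`K⁽⁰⁾ = [0,1]²`, `K⁽ⁿ⁾ = ⋃_{d ∈ D} (K⁽ⁿ⁻¹⁾ + d) / N`. -/
def approx (N : ℕ) (D : Finset (ℤ × ℤ)) : ℕ → Set Plane
  | 0 => unitSq
  | n + 1 => ⋃ d ∈ D, (fun x => (N : ℝ)⁻¹ • (x + emb d)) '' approx N D n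

/-- The fractal square `K = K(N, D) = ⋂_{n ≥ 1} K⁽ⁿ⁾`. -/
def FS (N : ℕ) (D : Finset (ℤ × ℤ)) : Set Plane := ⋂ n : ℕ, approx N D (n + 1)

/-- The lattice `ℤ² ⊆ ℝ²`. -/
def lattice : Set Plane := Set.range emb

/-- `H = K + ℤ²`. -/
def orbitH (N : ℕ) (D : Finset (ℤ × ℤ)) : Set Plane := FS N D + lattice

/-- A digit set for order `N`: a subset of `{0, …, N-1}²` with at least two elements. -/
def IsDigitSet (N : ℕ) (D : Finset (ℤ × ℤ)) : Prop :=
  2 ≤ D.card ∧ ∀ d ∈ D, 0 ≤ d.1 ∧ d.1 ≤ (N : ℤ) - 1 ∧ 0 ≤ d.2 ∧ d.2 ≤ (N : ℤ) - 1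

/-! ### Auxiliary material -/

lemma approx_subset_unitSq (N : ℕ) (hN : 3 ≤ N) (D : Finset (ℤ × ℤ))
    (hD : IsDigitSet N D) : ∀ n, approx N D n ⊆ unitSq := by
  have hNpos : (0:ℝ) < N := by exact_mod_cast (by omega : 0 < N)
  intro n
  induction n with
  | zero => exact fun x hx => hx
  | succ n ih =>
    intro x hx
    simp only [approx, mem_iUnion, mem_image] at hx
    obtain ⟨d, hd, y, hy, rfl⟩ := hx
    obtain ⟨h0, h1⟩ := ih hy
    obtain ⟨hd1, hd2, hd3, hd4⟩ := hD.2 d hd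
    have e0 : ((N:ℝ)⁻¹ • (y + emb d)) 0 = (N:ℝ)⁻¹ * (y 0 + (d.1:ℝ)) := by
      simp [emb, PiLp.smul_apply, PiLp.add_apply, mul_add]
    have e1 : ((N:ℝ)⁻¹ • (y + emb d)) 1 = (N:ℝ)⁻¹ * (y 1 + (d.2:ℝ)) := by
      simp [emb, PiLp.smul_apply, PiLp.add_apply, mul_add]
    have hb : ∀ t : ℝ, ∀ m : ℤ, t ∈ Icc (0:ℝ) 1 → 0 ≤ m → m ≤ (N:ℤ) - 1 →
        (N:ℝ)⁻¹ * (t + (m:ℝ)) ∈ Icc (0:ℝ) 1 := by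
      intro t m ht hm hm'
      have hm0 : (0:ℝ) ≤ (m:ℝ) := by exact_mod_cast hm
      have hm1 : (m:ℝ) ≤ (N:ℝ) - 1 := by
        have : ((m:ℤ):ℝ) ≤ (((N:ℤ) - 1 : ℤ) : ℝ) := by exact_mod_cast hm'
        push_cast at this; linarith
      constructor
      · have : (0:ℝ) ≤ t + m := by linarith [ht.1]
        positivity
      · have h : t + (m:ℝ) ≤ N := by linarith [ht.2]
        calc (N:ℝ)⁻¹ * (t + m) ≤ (N:ℝ)⁻¹ * N := by
              exact mul_le_mul_of_nonneg_left h (inv_nonneg.2 hNpos.le)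
          _ = 1 := inv_mul_cancel₀ hNpos.ne'
    exact ⟨by rw [e0]; exact hb _ _ ⟨h0.1, h0.2⟩ hd1 hd2,
           by rw [e1]; exact hb _ _ ⟨h1.1, h1.2⟩ hd3 hd4⟩

/-- Cross-section approximations along a column `C`. -/
def colF (N : ℕ) (C : Finset ℤ) : ℕ → Set ℝ
  | 0 => Icc 0 1
  | n + 1 => ⋃ q ∈ C, (fun t => (N : ℝ)⁻¹ * (t + (q:ℝ))) '' colF N C n

open MeasureTheory in
lemma volume_image_aff (N : ℕ) (q : ℤ) (s : Set ℝ) :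
    volume ((fun t => (N:ℝ)⁻¹ * (t + (q:ℝ))) '' s) = ENNReal.ofReal (N:ℝ)⁻¹ * volume s := by
  have h1 : (fun t => (N:ℝ)⁻¹ * (t + (q:ℝ))) '' s = (N:ℝ)⁻¹ • ((fun t => t + (q:ℝ)) '' s) := by
    rw [← Set.image_smul, Set.image_image]; simp [smul_eq_mul]
  rw [h1, Measure.addHaar_smul, Set.image_add_right, measure_preimage_add_right]
  simp [abs_of_nonneg]

open MeasureTheory in
lemma colF_volume (N : ℕ) (hN : 3 ≤ N) (C : Finset ℤ) (n : ℕ) :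
    volume (colF N C n) ≤ ENNReal.ofReal (((C.card : ℝ) / N) ^ n) := by
  have hNpos : (0:ℝ) < N := by exact_mod_cast (by omega : 0 < N)
  induction n with
  | zero => simp [colF, Real.volume_Icc]
  | succ n ih =>
    calc volume (colF N C (n+1))
        ≤ ∑ q ∈ C, volume ((fun t => (N : ℝ)⁻¹ * (t + (q:ℝ))) '' colF N C n) :=
          measure_biUnion_finset_le _ _
      _ = ∑ _q ∈ C, ENNReal.ofReal (N:ℝ)⁻¹ * volume (colF N C n) := by
          simp [volume_image_aff]
      _ ≤ ∑ _q ∈ C, ENNReal.ofReal (N:ℝ)⁻¹ * ENNReal.ofReal (((C.card : ℝ) / N) ^ n) := by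
          gcongr
      _ = (C.card : ENNReal) * (ENNReal.ofReal (N:ℝ)⁻¹ * ENNReal.ofReal (((C.card : ℝ) / N) ^ n)) := by
          rw [Finset.sum_const, nsmul_eq_mul]
      _ = ENNReal.ofReal (((C.card : ℝ) / N) ^ (n+1)) := by
          rw [← ENNReal.ofReal_mul (by positivity), ← ENNReal.ofReal_natCast,
            ← ENNReal.ofReal_mul (by positivity)]
          congr 1
          ring

lemma mem_colF (N : ℕ) (hN : 3 ≤ N) (D : Finset (ℤ × ℤ)) (hD : IsDigitSet N D)
    (j : ℤ) (hj0 : 0 ≤ j) (hj1 : j ≤ (N:ℤ) - 1) :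
    ∀ n, ∀ x ∈ approx N D n, x 0 = (j:ℝ) / ((N:ℝ) - 1) →
      x 1 ∈ colF N ((D.filter (fun d => d.1 = j)).image Prod.snd) n := by
  have hNpos : (0:ℝ) < N := by exact_mod_cast (by omega : 0 < N)
  have hN1 : (0:ℝ) < (N:ℝ) - 1 := by
    have : (3:ℝ) ≤ N := by exact_mod_cast hN
    linarith
  set a : ℝ := (j:ℝ) / ((N:ℝ) - 1) with ha
  have haj : a * ((N:ℝ) - 1) = (j:ℝ) := div_mul_cancel₀ _ hN1.ne'
  have ha0 : 0 ≤ a := by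
    apply div_nonneg _ hN1.le; exact_mod_cast hj0
  have ha1 : a ≤ 1 := by
    rw [ha, div_le_one hN1]
    have : ((j:ℤ):ℝ) ≤ (((N:ℤ) - 1 : ℤ):ℝ) := by exact_mod_cast hj1
    push_cast at this; linarith
  intro n
  induction n with
  | zero => intro x hx _; exact hx.2
  | succ n ih =>
    intro x hx hx0
    simp only [approx, mem_iUnion, mem_image] at hx
    obtain ⟨d, hd, y, hy, rfl⟩ := hx
    obtain ⟨hd1, hd2, _, _⟩ := hD.2 d hd
    have e0 : ((N:ℝ)⁻¹ • (y + emb d)) 0 = (N:ℝ)⁻¹ * (y 0 + (d.1:ℝ)) := by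
      simp [emb, PiLp.smul_apply, PiLp.add_apply, mul_add]
    have e1 : ((N:ℝ)⁻¹ • (y + emb d)) 1 = (N:ℝ)⁻¹ * (y 1 + (d.2:ℝ)) := by
      simp [emb, PiLp.smul_apply, PiLp.add_apply, mul_add]
    rw [e0] at hx0
    have hy0eq : y 0 = a * N - (d.1:ℝ) := by
      field_simp at hx0
      linarith
    have hyu := approx_subset_unitSq N hN D hD n hy
    have hy01 : y 0 ∈ Icc (0:ℝ) 1 := hyu.1
    have hNa : a * (N:ℝ) = (j:ℝ) + a := by nlinarith [haj]
    -- show d.1 = j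
    have hdj : d.1 = j := by
      by_contra hne
      rcases lt_or_gt_of_ne hne with h | h
      · -- d.1 ≤ j - 1
        have hc : (d.1:ℝ) ≤ (j:ℝ) - 1 := by
          have : ((d.1:ℤ):ℝ) ≤ ((j - 1 : ℤ):ℝ) := by exact_mod_cast (by omega : d.1 ≤ j - 1)
          push_cast at this; linarith
        have hA : a ≤ 0 := by
          have := hy01.2
          rw [hy0eq, hNa] at this
          linarith
        have haz : a = 0 := le_antisymm hA ha0
        have hjz : j = 0 := by
          have : (j:ℝ) = 0 := by rw [← haj, haz]; ring
          exact_mod_cast this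
        omega
      · -- d.1 ≥ j + 1
        have hc : (j:ℝ) + 1 ≤ (d.1:ℝ) := by
          have : ((j + 1 : ℤ):ℝ) ≤ ((d.1:ℤ):ℝ) := by exact_mod_cast (by omega : j + 1 ≤ d.1)
          push_cast at this; linarith
        have hA : 1 ≤ a := by
          have := hy01.1
          rw [hy0eq, hNa] at this
          linarith
        have haz : a = 1 := le_antisymm ha1 hA
        have hjz : (j:ℝ) = (N:ℝ) - 1 := by rw [← haj, haz]; ring
        have : j = (N:ℤ) - 1 := by
          have h2 : ((j:ℤ):ℝ) = (((N:ℤ) - 1 : ℤ):ℝ) := by push_cast; linarith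
          exact_mod_cast h2
        omega
    have hy0a : y 0 = a := by rw [hy0eq, hNa, hdj]; ring
    have hmem := ih y hy hy0a
    rw [e1]
    simp only [colF, mem_iUnion, mem_image]
    refine ⟨d.2, ?_, y 1, hmem, rfl⟩
    exact Finset.mem_image.2 ⟨d, Finset.mem_filter.2 ⟨hd, hdj⟩, rfl⟩

open MeasureTheory in
/-- If `N ≥ 3`, every component of `K` is a singleton or a vertical line
segment, and `d = (j,k) ∈ D` is such that the column `{j} × {0,…,N−1}` is not
contained in `D`, then the fixed point `x₀ = (j/(N−1), k/(N−1))` of `f_d` lies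
in `K` and its component in `K` is `{x₀}`. -/
theorem stmt10 (N : ℕ) (hN : 3 ≤ N) (D : Finset (ℤ × ℤ)) (hD : IsDigitSet N D)
    (hcomp : ∀ x ∈ FS N D,
      connectedComponentIn (FS N D) x = {x} ∨
      ∃ a b c : ℝ, b < c ∧
        connectedComponentIn (FS N D) x = {p : Plane | p 0 = a ∧ p 1 ∈ Icc b c})
    (j k : ℤ) (hjk : (j, k) ∈ D)
    (hcol : ∃ i : ℤ, 0 ≤ i ∧ i ≤ (N : ℤ) - 1 ∧ (j, i) ∉ D) :
    (WithLp.toLp 2 ![(j : ℝ) / ((N : ℝ) - 1), (k : ℝ) / ((N : ℝ) - 1)] : Plane) ∈ FS N D ∧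
      connectedComponentIn (FS N D)
          (WithLp.toLp 2 ![(j : ℝ) / ((N : ℝ) - 1), (k : ℝ) / ((N : ℝ) - 1)] : Plane) =
        {(WithLp.toLp 2 ![(j : ℝ) / ((N : ℝ) - 1), (k : ℝ) / ((N : ℝ) - 1)] : Plane)} := by
  have hNpos : (0:ℝ) < N := by exact_mod_cast (by omega : 0 < N)
  have hN1 : (0:ℝ) < (N:ℝ) - 1 := by
    have : (3:ℝ) ≤ N := by exact_mod_cast hN
    linarith
  obtain ⟨hj0, hj1, hk0, hk1⟩ := hD.2 (j, k) hjk
  set x₀ : Plane := (WithLp.toLp 2 ![(j : ℝ) / ((N : ℝ) - 1), (k : ℝ) / ((N : ℝ) - 1)] : Plane) with hx₀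
  have hbound : ∀ m : ℤ, 0 ≤ m → m ≤ (N:ℤ) - 1 → (m:ℝ) / ((N:ℝ) - 1) ∈ Icc (0:ℝ) 1 := by
    intro m hm hm'
    constructor
    · apply div_nonneg _ hN1.le; exact_mod_cast hm
    · rw [div_le_one hN1]
      have : ((m:ℤ):ℝ) ≤ (((N:ℤ) - 1 : ℤ):ℝ) := by exact_mod_cast hm'
      push_cast at this; linarith
  -- x₀ is in every approximation
  have hfix : (fun x : Plane => (N : ℝ)⁻¹ • (x + emb (j, k))) x₀ = x₀ := by
    ext i
    fin_cases i <;>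
      · simp [hx₀, emb, PiLp.smul_apply, PiLp.add_apply]
        field_simp
        ring
  have happrox : ∀ n, x₀ ∈ approx N D n := by
    intro n
    induction n with
    | zero =>
      constructor
      · simpa [hx₀] using hbound j hj0 hj1
      · simpa [hx₀] using hbound k hk0 hk1
    | succ n ih =>
      simp only [approx, mem_iUnion, mem_image]
      exact ⟨(j, k), hjk, x₀, ih, hfix⟩
  have hxFS : x₀ ∈ FS N D := mem_iInter.2 fun n => happrox (n + 1)
  refine ⟨hxFS, ?_⟩
  rcases hcomp x₀ hxFS with h | ⟨a, b, c, hbc, hEq⟩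
  · exact h
  -- derive a contradiction from the vertical segment case
  exfalso
  have hxmem : x₀ ∈ connectedComponentIn (FS N D) x₀ := mem_connectedComponentIn hxFS
  rw [hEq] at hxmem
  obtain ⟨hax, hbcx⟩ := hxmem
  have hx00 : x₀ 0 = (j:ℝ) / ((N:ℝ) - 1) := by simp [hx₀]
  set C : Finset ℤ := (D.filter (fun d => d.1 = j)).image Prod.snd with hC
  obtain ⟨i, hi0, hi1, hiD⟩ := hcol
  -- C has at most N - 1 elements
  have hCcard : (C.card : ℝ) ≤ (N:ℝ) - 1 := by
    have hsub : C ⊆ (Finset.Icc (0:ℤ) ((N:ℤ) - 1)).erase i := by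
      intro q hq
      obtain ⟨d, hd, rfl⟩ := Finset.mem_image.1 hq
      obtain ⟨hdD, hdj⟩ := Finset.mem_filter.1 hd
      obtain ⟨_, _, hq0, hq1⟩ := hD.2 d hdD
      refine Finset.mem_erase.2 ⟨?_, Finset.mem_Icc.2 ⟨hq0, hq1⟩⟩
      rintro rfl
      exact hiD (by rw [← hdj]; exact hdD)
    have h1 : C.card ≤ ((Finset.Icc (0:ℤ) ((N:ℤ) - 1)).erase i).card :=
      Finset.card_le_card hsub
    have h2 : ((Finset.Icc (0:ℤ) ((N:ℤ) - 1)).erase i).card =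
        (Finset.Icc (0:ℤ) ((N:ℤ) - 1)).card - 1 :=
      Finset.card_erase_of_mem (Finset.mem_Icc.2 ⟨hi0, hi1⟩)
    have h3 : (Finset.Icc (0:ℤ) ((N:ℤ) - 1)).card = N := by
      rw [Int.card_Icc]
      omega
    have : C.card ≤ N - 1 := by omega
    have hcast : (C.card : ℝ) ≤ ((N - 1 : ℕ) : ℝ) := by exact_mod_cast this
    have : ((N - 1 : ℕ) : ℝ) = (N:ℝ) - 1 := by
      have : 1 ≤ N := by omega
      push_cast [this]
      ring
    linarith
  set r : ℝ := (C.card : ℝ) / N with hr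
  have hr0 : 0 ≤ r := by positivity
  have hr1 : r < 1 := by
    rw [hr, div_lt_one hNpos]
    linarith
  -- the segment is contained in every colF
  have hkey : ∀ n : ℕ, c - b ≤ r ^ (n + 1) := by
    intro n
    have hsub : Icc b c ⊆ colF N C (n + 1) := by
      intro y hy
      set p : Plane := (WithLp.toLp 2 ![(j:ℝ) / ((N:ℝ) - 1), y] : Plane) with hp
      have hpmem : p ∈ {p : Plane | p 0 = a ∧ p 1 ∈ Icc b c} := by
        refine ⟨?_, ?_⟩
        · simp [hp, ← hax, hx00]
        · simpa [hp] using hy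
      rw [← hEq] at hpmem
      have hpFS : p ∈ FS N D := connectedComponentIn_subset _ _ hpmem
      have hpapprox : p ∈ approx N D (n + 1) := mem_iInter.1 hpFS n
      have := mem_colF N hN D hD j hj0 hj1 (n + 1) p hpapprox (by simp [hp])
      simpa [hp] using this
    have hvol : ENNReal.ofReal (c - b) ≤ ENNReal.ofReal (r ^ (n + 1)) := by
      calc ENNReal.ofReal (c - b) = volume (Icc b c) := (Real.volume_Icc).symm
        _ ≤ volume (colF N C (n + 1)) := measure_mono hsub
        _ ≤ ENNReal.ofReal (r ^ (n + 1)) := colF_volume N hN C (n + 1)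
    exact (ENNReal.ofReal_le_ofReal_iff (by positivity)).1 hvol
  have hlim : Tendsto (fun n : ℕ => r ^ (n + 1)) atTop (nhds 0) :=
    (tendsto_pow_atTop_nhds_zero_of_lt_one hr0 hr1).comp (tendsto_add_atTop_nat 1)
  have : c - b ≤ 0 := ge_of_tendsto' hlim hkey
  linarith
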